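/- Chain LP bound, case of heaviest negative edge excluded: For a chain of length k ≥ 3 with positive weights a_1, …, a_{k−1} on consecutive edges and weight −b on the edge (1, k), if 0 < b < min(a_1, …, a_{k−1}), then every LP-feasible point x on k vertices satisfies ∑_{i=1}^{k−1} a_i · x(i, i+1) − b · x(1, k) ≤ ∑_{i=1}^{k−1} a_i − b. -/
import Mathlib


open Finset

/-- An LP-feasible point: symmetric, entries in `[0,1]`, satisfying the triangle
inequalities of the LP relaxation of the clique partitioning ILP. -/
def LPFeasible {n : ℕ} (x : Fin n → Fin n → ℝ) : Prop :=
  (∀ i j, x i j = x j i) ∧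
  (∀ i j : Fin n, i < j → 0 ≤ x i j ∧ x i j ≤ 1) ∧
  (∀ i j k : Fin n, i < j → j < k →
    x i j + x j k - x i k ≤ 1 ∧ x i j - x j k + x i k ≤ 1 ∧ -x i j + x j k + x i k ≤ 1)

/-- LP objective value `∑_{i<j} w i j * x i j`. -/
noncomputable def lpObj {n : ℕ} (w x : Fin n → Fin n → ℝ) : ℝ :=
  ∑ i : Fin n, ∑ j : Fin n, if i < j then w i j * x i j else 0

/-- **Chain LP bound, heaviest-negative-edge case.** For a chain of length `k ≥ 3`
with positive weights `a 0, …, a (k-2)` on consecutive edges and weight `-b` on the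
edge `(0, k-1)`, if `0 < b < min (a 0, …, a (k-2))`, then every LP-feasible point `x`
satisfies `∑ i, a i * x(i, i+1) - b * x(0, k-1) ≤ ∑ i, a i - b`. -/
theorem chain_LP_bound_negative_edge (k : ℕ) (hk : 3 ≤ k) (a : ℕ → ℝ) (b : ℝ)
    (ha : ∀ i, i < k - 1 → 0 < a i) (hb : 0 < b)
    (hbmin : b < (Finset.range (k - 1)).inf' (Finset.nonempty_range_iff.mpr (by omega)) a)
    (x : Fin k → Fin k → ℝ) (hx : LPFeasible x) :
    (∑ i : Fin (k - 1), a i.val *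
        x ⟨i.val, by have := i.isLt; omega⟩ ⟨i.val + 1, by have := i.isLt; omega⟩)
      - b * x ⟨0, by omega⟩ ⟨k - 1, by omega⟩
    ≤ (∑ i ∈ Finset.range (k - 1), a i) - b := by
  obtain ⟨hsym, hbd, htri⟩ := hx
  set y : ℕ → ℕ → ℝ := fun i j =>
    if hi : i < k then if hj : j < k then x ⟨i, hi⟩ ⟨j, hj⟩ else 0 else 0 with hy
  have hyval : ∀ i j (hi : i < k) (hj : j < k), y i j = x ⟨i, hi⟩ ⟨j, hj⟩ := by
    intro i j hi hj; simp [hy, hi, hj]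
  have hy01 : ∀ i j, i < j → j < k → 0 ≤ y i j ∧ y i j ≤ 1 := by
    intro i j hij hjk
    rw [hyval i j (by omega) hjk]
    exact hbd _ _ (by simpa [Fin.lt_def] using hij)
  have hytri : ∀ i j l, i < j → j < l → l < k →
      y i j + y j l - y i l ≤ 1 := by
    intro i j l hij hjl hlk
    rw [hyval i j (by omega) (by omega), hyval j l (by omega) hlk,
      hyval i l (by omega) hlk]
    exact (htri _ _ _ (by simpa [Fin.lt_def] using hij)
      (by simpa [Fin.lt_def] using hjl)).1
  have key : ∀ m, 1 ≤ m → m < k →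
      (∑ i ∈ range m, y i (i + 1)) ≤ y 0 m + ((m : ℝ) - 1) := by
    intro m hm
    induction m, hm using Nat.le_induction with
    | base => intro _; simp
    | succ m hm ih =>
      intro hmk
      have ih' := ih (by omega)
      have htr := hytri 0 m (m + 1) (by omega) (by omega) hmk
      rw [Finset.sum_range_succ]
      push_cast
      linarith
  have hsum := key (k - 1) (by omega) (by omega)
  have hcast : ((k - 1 : ℕ) : ℝ) = (k : ℝ) - 1 := by
    have : (1:ℕ) ≤ k := by omega
    push_cast [Nat.cast_sub this]
    ring
  -- rewrite goal sum in terms of y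
  have hgoal : (∑ i : Fin (k - 1), a i.val *
        x ⟨i.val, by have := i.isLt; omega⟩ ⟨i.val + 1, by have := i.isLt; omega⟩)
      = ∑ i ∈ range (k - 1), a i * y i (i + 1) := by
    rw [Finset.sum_range fun i => a i * y i (i + 1)]
    apply Finset.sum_congr rfl
    intro i _
    rw [hyval i.val (i.val + 1) (by omega) (by omega)]
  have hx0 : x ⟨0, by omega⟩ ⟨k - 1, by omega⟩ = y 0 (k - 1) := by
    rw [hyval 0 (k - 1) (by omega) (by omega)]
  rw [hgoal, hx0]
  have hba : ∀ i ∈ range (k - 1), b ≤ a i := by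
    intro i hi
    exact le_of_lt (lt_of_lt_of_le hbmin (Finset.inf'_le a hi))
  have step1 : ∑ i ∈ range (k - 1), a i * y i (i + 1) - b * y 0 (k - 1)
      ≤ ∑ i ∈ range (k - 1), a i * y i (i + 1)
        - b * ((∑ i ∈ range (k - 1), y i (i + 1)) - ((k : ℝ) - 2)) := by
    have : (∑ i ∈ range (k - 1), y i (i + 1)) - ((k : ℝ) - 2) ≤ y 0 (k - 1) := by
      rw [hcast] at hsum; linarith
    nlinarith
  have step2 : ∑ i ∈ range (k - 1), (a i - b) * y i (i + 1)
      ≤ ∑ i ∈ range (k - 1), (a i - b) := by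
    apply Finset.sum_le_sum
    intro i hi
    have h01 := hy01 i (i + 1) (by omega) (by simp at hi; omega)
    have := hba i hi
    nlinarith
  have step3 : ∑ i ∈ range (k - 1), (a i - b) =
      (∑ i ∈ range (k - 1), a i) - ((k : ℝ) - 1) * b := by
    rw [Finset.sum_sub_distrib, Finset.sum_const, Finset.card_range, nsmul_eq_mul, hcast]
  have hexp : ∑ i ∈ range (k - 1), (a i - b) * y i (i + 1)
      = ∑ i ∈ range (k - 1), a i * y i (i + 1)
        - b * ∑ i ∈ range (k - 1), y i (i + 1) := by
    rw [Finset.mul_sum, ← Finset.sum_sub_distrib]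
    apply Finset.sum_congr rfl
    intro i _; ring
  have hk3 : (3 : ℝ) ≤ (k : ℝ) := by exact_mod_cast hk
  linarith [step1, step2]
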